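/- Let i, k, r, s be positive integers and let n ≥ max{k-i-1, -1} be an integer. Then F^i_{r,s}(k, n+ik) = r^k·F^i_{r,s}(k,n) + ∑_{j=0}^{k-1} r^j·s·F^i_{r,s}(k, n+ik-k-ji). -/
import Mathlib


/-- Auxiliary sequence: `genFibAux i k r s m` equals `F^i_{r,s}(k, m-1)`, i.e. the
four-parameters sequence indexed by `m = n + 1 ≥ 0`.  For `i ≤ k` the initial values
(`-1 ≤ n ≤ k-2`, i.e. `m < k`) are `r^⌊(n+1)/i⌋`, for `k < i` (`m < i`) they are
`s^⌊(n+1)/k⌋`, and for `n ≥ max{k,i} - 1` the recurrence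
`F(n) = r·F(n-i) + s·F(n-k)` holds. -/
def genFibAux (i k r s : ℕ) : ℕ → ℤ
  | m =>
    if m < max (max k i) 1 then
      if i ≤ k then (r : ℤ) ^ (m / i) else (s : ℤ) ^ (m / k)
    else
      r * genFibAux i k r s (m - max i 1) + s * genFibAux i k r s (m - max k 1)
  termination_by m => m
  decreasing_by all_goals omega

/-- The four-parameters sequence `F^i_{r,s}(k,n)` for integer `n ≥ -1`, with the
convention that it vanishes for `n ≤ -2`. -/
def genFib (i k r s : ℕ) (n : ℤ) : ℤ :=
  if n < -1 then 0 else genFibAux i k r s (n + 1).toNat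

lemma genFib_rec (i k r s : ℕ) (hi : 0 < i) (hk : 0 < k) (N : ℤ)
    (hNk : (k : ℤ) ≤ N + 1) (hNi : (i : ℤ) ≤ N + 1) :
    genFib i k r s N = r * genFib i k r s (N - i) + s * genFib i k r s (N - k) := by
  have h0 : 0 ≤ N := by omega
  unfold genFib
  rw [if_neg (by omega), if_neg (by omega), if_neg (by omega)]
  have hm : ((N + 1).toNat : ℤ) = N + 1 := Int.toNat_of_nonneg (by omega)
  rw [genFibAux]
  rw [if_neg (by omega)]
  have h1 : (N + 1).toNat - max i 1 = (N - i + 1).toNat := by omega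
  have h2 : (N + 1).toNat - max k 1 = (N - k + 1).toNat := by omega
  rw [h1, h2]

lemma genFib_shift_aux (i k r s : ℕ) (hi : 0 < i) (hk : 0 < k) (n : ℤ)
    (hnk : (k : ℤ) - i - 1 ≤ n) (hn1 : (-1 : ℤ) ≤ n) :
    ∀ m, m ≤ k → genFib i k r s (n + (i : ℤ) * k) =
      (r : ℤ) ^ m * genFib i k r s (n + (i : ℤ) * k - (i : ℤ) * m) +
        ∑ j ∈ Finset.range m,
          (r : ℤ) ^ j * s * genFib i k r s (n + (i : ℤ) * k - k - (j : ℤ) * i) := by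
  intro m
  induction m with
  | zero => simp
  | succ m ih =>
    intro hmk
    rw [ih (by omega)]
    have him : (i : ℤ) * m + i ≤ (i : ℤ) * k := by
      have h' : i * m + i ≤ i * k := by
        have := Nat.mul_le_mul_left i hmk
        rwa [Nat.mul_succ] at this
      exact_mod_cast h'
    set N : ℤ := n + (i : ℤ) * k - (i : ℤ) * m with hN
    have hrec := genFib_rec i k r s hi hk N (by push_cast [hN] at him ⊢; omega)
      (by push_cast [hN] at him ⊢; omega)
    rw [hrec]
    have e1 : N - (i : ℤ) = n + (i : ℤ) * k - (i : ℤ) * (m + 1) := by rw [hN]; ring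
    have e2 : N - (k : ℤ) = n + (i : ℤ) * k - k - (m : ℤ) * i := by rw [hN]; ring
    rw [e1, e2, Finset.sum_range_succ]
    push_cast
    ring

/-- For positive integers `i, k, r, s` and integer
`n ≥ max{k-i-1, -1}`,
`F^i_{r,s}(k, n+ik) = r^k·F^i_{r,s}(k,n) + ∑_{j=0}^{k-1} r^j·s·F^i_{r,s}(k, n+ik-k-ji)`. -/
theorem genFib_shift_ik (i k r s : ℕ) (hi : 0 < i) (hk : 0 < k) (hr : 0 < r)
    (hs : 0 < s) (n : ℤ) (hn : max ((k : ℤ) - i - 1) (-1) ≤ n) :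
    genFib i k r s (n + (i : ℤ) * k) =
      (r : ℤ) ^ k * genFib i k r s n +
        ∑ j ∈ Finset.range k,
          (r : ℤ) ^ j * s * genFib i k r s (n + (i : ℤ) * k - k - (j : ℤ) * i) := by
  have h := genFib_shift_aux i k r s hi hk n (by omega) (by omega) k le_rfl
  rw [h]
  congr 2
  ring_nf
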